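/- Every mesh pattern has a unique decomposition as a direct sum of indecomposable mesh patterns. -/

import Mathlib

/-!
# The poset of mesh patterns

A mesh pattern is a permutation of `{1, ..., len}` together with a set of shaded
boxes in the `(len+1) × (len+1)` grid (boxes are indexed by their south-west corner,
so boxes have coordinates in `{0, ..., len} × {0, ..., len}`).

We normalise the permutation as a function `ℕ → ℕ` (using 1-based indexing) which is
`0` outside of `[1, len]`; this makes equality of mesh patterns coincide with equality
of the underlying data.
-/

structure MeshPattern where
  len : ℕ
  perm : ℕ → ℕ
  sh : Finset (ℕ × ℕ)
  perm_mem : ∀ i, 1 ≤ i → i ≤ len → 1 ≤ perm i ∧ perm i ≤ len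
  perm_zero : ∀ i, i = 0 ∨ len < i → perm i = 0
  perm_inj : ∀ i j, 1 ≤ i → i ≤ len → 1 ≤ j → j ≤ len → perm i = perm j → i = j
  perm_surj : ∀ v, 1 ≤ v → v ≤ len → ∃ i, 1 ≤ i ∧ i ≤ len ∧ perm i = v
  sh_mem : ∀ q ∈ sh, q.1 ≤ len ∧ q.2 ≤ len

namespace MeshPattern

/-- The (1-based) position of the value `v` in the underlying permutation of `m`. -/
noncomputable def pos (m : MeshPattern) (v : ℕ) : ℕ := Function.invFun m.perm v

/-- The dimension of a mesh pattern: length of the permutation plus number of shaded boxes. -/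
def dim (m : MeshPattern) : ℕ := m.len + m.sh.card

/-- Given (the position map of an occurrence) `η` of `m` in `p`, the extended column
boundary map: pattern column boundary `i` (for `0 ≤ i ≤ m.len + 1`) is sent to the
corresponding column boundary in `p`.  Boxes of `p` with first coordinate `a` satisfying
`colExt m p η i ≤ a < colExt m p η (i+1)` are exactly the boxes lying horizontally
within the region corresponding to pattern boxes with first coordinate `i`. -/
def colExt (m p : MeshPattern) (η : ℕ → ℕ) (i : ℕ) : ℕ :=
  if i = 0 then 0 else if i ≤ m.len then η i else p.len + 1

/-- The analogous extended row (value) boundary map. -/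
noncomputable def valExt (m p : MeshPattern) (η : ℕ → ℕ) (j : ℕ) : ℕ :=
  if j = 0 then 0 else if j ≤ m.len then p.perm (η (m.pos j)) else p.len + 1

/-- The box `(a, b)` of `p` lies in the region `R_η(i, j)` of the box `(i, j)` of `m`. -/
def inRegion (m p : MeshPattern) (η : ℕ → ℕ) (i j a b : ℕ) : Prop :=
  colExt m p η i ≤ a ∧ a < colExt m p η (i + 1) ∧
    valExt m p η j ≤ b ∧ b < valExt m p η (j + 1)

/-- The point of `p` at position `y` lies in the open interior of the region `R_η(i, j)`. -/
def interiorPt (m p : MeshPattern) (η : ℕ → ℕ) (i j y : ℕ) : Prop :=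
  colExt m p η i < y ∧ y < colExt m p η (i + 1) ∧
    valExt m p η j < p.perm y ∧ p.perm y < valExt m p η (j + 1)

/-- `η` is an occurrence of the mesh pattern `m` in the mesh pattern `p`:
a (normalised) strictly increasing choice of positions realising the underlying
classical pattern, such that for every shaded box of `m` the corresponding region of `p`
contains no point of `p` in its interior and consists entirely of shaded boxes of `p`. -/
structure IsOcc (m p : MeshPattern) (η : ℕ → ℕ) : Prop where
  zero : ∀ i, i = 0 ∨ m.len < i → η i = 0
  mem : ∀ i, 1 ≤ i → i ≤ m.len → 1 ≤ η i ∧ η i ≤ p.len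
  mono : ∀ i j, 1 ≤ i → i < j → j ≤ m.len → η i < η j
  pattern : ∀ i j, 1 ≤ i → i ≤ m.len → 1 ≤ j → j ≤ m.len →
    (m.perm i < m.perm j ↔ p.perm (η i) < p.perm (η j))
  no_point : ∀ q ∈ m.sh, ∀ y, 1 ≤ y → y ≤ p.len → ¬ interiorPt m p η q.1 q.2 y
  shaded : ∀ q ∈ m.sh, ∀ a b, inRegion m p η q.1 q.2 a b → (a, b) ∈ p.sh

/-- The mesh pattern poset: `m ≤ p` iff there is an occurrence of `m` in `p`. -/
instance : LE MeshPattern := ⟨fun m p => ∃ η, IsOcc m p η⟩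

instance : LT MeshPattern := ⟨fun m p => m ≤ p ∧ m ≠ p⟩

/-- `b` covers `a` in the mesh pattern poset. -/
def CovByM (a b : MeshPattern) : Prop := a < b ∧ ¬ ∃ z, a < z ∧ z < b

open Classical in
/-- The Möbius function of a (locally finite) partial order `r`, computed with a fuel
parameter: `muFuel r n a b` is the Möbius function `μ(a, b)` provided `n` is at least the
length of the longest chain from `a` to `b` (with the convention `μ(a, b) = 0` if
`¬ r a b`). -/
noncomputable def muFuel {α : Type*} (r : α → α → Prop) : ℕ → α → α → ℤ
  | 0, a, b => if a = b then 1 else 0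
  | n + 1, a, b =>
      if a = b then 1
      else if r a b then - ∑ᶠ c ∈ {c | r a c ∧ r c b ∧ c ≠ b}, muFuel r n a c
      else 0

/-- The Möbius function of the mesh pattern poset.  Since every chain from `m` to `p` has
length at most `dim p`, the fuel `dim p + 1` is sufficient, so this is the genuine Möbius
function: `mu m m = 1`, `mu m p = -∑_{m ≤ c < p} mu m c` for `m < p`, and `mu m p = 0`
when `m ≰ p`. -/
noncomputable def mu (m p : MeshPattern) : ℤ := muFuel (· ≤ ·) (p.dim + 1) m p

/-- The classical permutation poset `𝓟`, realised as the subposet of unshaded mesh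
patterns (for unshaded patterns, mesh occurrence is exactly classical pattern
containment).  Its Möbius function. -/
noncomputable def muP (σ π : {m : MeshPattern // m.sh = ∅}) : ℤ :=
  muFuel (· ≤ ·) (π.1.len + 1) σ π

/-- The mesh pattern with underlying identity permutation of length `n`
and shaded boxes `s`. -/
def ofId (n : ℕ) (s : Finset (ℕ × ℕ)) (hs : ∀ q ∈ s, q.1 ≤ n ∧ q.2 ≤ n) : MeshPattern where
  len := n
  perm := fun i => if 1 ≤ i ∧ i ≤ n then i else 0
  sh := s
  perm_mem := by intro i h1 h2; (try dsimp only); rw [if_pos ⟨h1, h2⟩]; omega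
  perm_zero := by intro i h; (try dsimp only); rw [if_neg]; omega
  perm_inj := by intro i j h1 h2 h3 h4 h; (try dsimp only at h); rw [if_pos ⟨h1, h2⟩, if_pos ⟨h3, h4⟩] at h; omega
  perm_surj := by
    intro v h1 h2; exact ⟨v, h1, h2, by (try dsimp only); rw [if_pos ⟨h1, h2⟩]⟩
  sh_mem := hs

/-- The mesh pattern with underlying decreasing permutation of length `n`
and shaded boxes `s`. -/
def ofRev (n : ℕ) (s : Finset (ℕ × ℕ)) (hs : ∀ q ∈ s, q.1 ≤ n ∧ q.2 ≤ n) : MeshPattern where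
  len := n
  perm := fun i => if 1 ≤ i ∧ i ≤ n then n + 1 - i else 0
  sh := s
  perm_mem := by intro i h1 h2; (try dsimp only); rw [if_pos ⟨h1, h2⟩]; omega
  perm_zero := by intro i h; (try dsimp only); rw [if_neg]; omega
  perm_inj := by intro i j h1 h2 h3 h4 h; (try dsimp only at h); rw [if_pos ⟨h1, h2⟩, if_pos ⟨h3, h4⟩] at h; omega
  perm_surj := by
    intro v h1 h2
    exact ⟨n + 1 - v, by omega, by omega, by (try dsimp only); rw [if_pos ⟨by omega, by omega⟩]; omega⟩
  sh_mem := hs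

/-- The unshaded singleton mesh pattern `1^∅`. -/
def one0 : MeshPattern := ofId 1 ∅ (by simp)

/-- The empty mesh pattern `ε^∅`. -/
def eps0 : MeshPattern := ofId 0 ∅ (by simp)

/-- The empty mesh pattern `ε^{(0,0)}` with its single box shaded. -/
def eps00 : MeshPattern := ofId 0 {(0, 0)} (by decide)

/-- The singleton mesh patterns `1^{(a,b)}` for `a b ∈ {0,1}`. -/
def one00 : MeshPattern := ofId 1 {(0, 0)} (by decide)
def one10 : MeshPattern := ofId 1 {(1, 0)} (by decide)
def one01 : MeshPattern := ofId 1 {(0, 1)} (by decide)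
def one11 : MeshPattern := ofId 1 {(1, 1)} (by decide)

/-- The mesh pattern `21^{(0,0),(1,0)}`. -/
def pat21 : MeshPattern := ofRev 2 {(0, 0), (1, 0)} (by decide)

/-- Replace the shading of `p` by a subset `A ⊆ sh p` (same underlying permutation):
this is the mesh pattern `(cl p)^A`. -/
def reshade (p : MeshPattern) (A : Finset (ℕ × ℕ)) (hA : A ⊆ p.sh) : MeshPattern :=
  { p with sh := A, sh_mem := fun q hq => p.sh_mem q (hA hq) }

/-- The occurrence `η` of `s` in `p` uses the shaded box `(a, b) ∈ sh p`. -/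
def UsesBox (s p : MeshPattern) (η : ℕ → ℕ) (a b : ℕ) : Prop :=
  (a, b) ∈ p.sh ∧ ∃ i j, (i, j) ∈ s.sh ∧ inRegion s p η i j a b

/-- The position map of the occurrence of `p − x` in `p` avoiding the point at
position `x`. -/
def etaDel (p : MeshPattern) (x : ℕ) : ℕ → ℕ := fun i =>
  if 1 ≤ i ∧ i ≤ p.len - 1 then (if i < x then i else i + 1) else 0

/-- The underlying permutation of the pattern obtained from `p` by deleting the point at
position `x`. -/
def delPerm (p : MeshPattern) (x : ℕ) : ℕ → ℕ := fun i =>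
  if 1 ≤ i ∧ i ≤ p.len - 1 then
    (if p.perm (etaDel p x i) < p.perm x then p.perm (etaDel p x i)
     else p.perm (etaDel p x i) - 1)
  else 0

/-- `q` is the mesh pattern `p − x` obtained from `p` by deleting the point at position
`x` (where `1 ≤ x ≤ len p`): the underlying permutation is obtained by deleting that
letter, and a box of `q` is shaded exactly when the corresponding region of `p` (under
the occurrence `etaDel p x`) is entirely shaded and contains no point of `p` in its
interior.  In particular `etaDel p x` is an occurrence of `q` in `p`. -/
def IsDeletion (p : MeshPattern) (x : ℕ) (q : MeshPattern) : Prop :=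
  1 ≤ x ∧ x ≤ p.len ∧ q.len + 1 = p.len ∧ q.perm = delPerm p x ∧
    ∀ i j : ℕ, ((i, j) ∈ q.sh ↔ i ≤ q.len ∧ j ≤ q.len ∧
      (∀ a b, inRegion q p (etaDel p x) i j a b → (a, b) ∈ p.sh) ∧
      ∀ y, 1 ≤ y → y ≤ p.len → ¬ interiorPt q p (etaDel p x) i j y)

/-- Deleting the point at position `x` of `p` (with `q = p − x`) merges shadings:
some shaded box of `q` corresponds to more than one shaded box of `p`. -/
def MergesShadings (p : MeshPattern) (x : ℕ) (q : MeshPattern) : Prop :=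
  ∃ i j, (i, j) ∈ q.sh ∧ ∃ a b a' b', (a, b) ≠ (a', b') ∧ (a, b) ∈ p.sh ∧
    (a', b') ∈ p.sh ∧ inRegion q p (etaDel p x) i j a b ∧
    inRegion q p (etaDel p x) i j a' b'

/-- `f 0 ⋖ f 1 ⋖ ⋯ ⋖ f k` is a maximal chain of length `k` from `a` to `b`. -/
def IsMaxChain (a b : MeshPattern) (k : ℕ) (f : ℕ → MeshPattern) : Prop :=
  f 0 = a ∧ f k = b ∧ ∀ i < k, CovByM (f i) (f (i + 1))

/-- Underlying permutation of the direct sum `s ⊕ t`. -/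
def dsumPerm (s t : MeshPattern) : ℕ → ℕ := fun i =>
  if i ≤ s.len then s.perm i
  else if i ≤ s.len + t.len then t.perm (i - s.len) + s.len
  else 0

/-- Shading of the direct sum `s ⊕ t`: the shadings of `s` and of `t` (translated), where
boxes on the shared boundary are extended to the new boundary (north/east for boxes of
`s`, south/west for boxes of `t`). -/
def dsumSh (s t : MeshPattern) : Finset (ℕ × ℕ) :=
  s.sh ∪ t.sh.image (fun q => (q.1 + s.len, q.2 + s.len)) ∪
    (s.sh.filter (fun q => q.2 = s.len)).biUnion
      (fun q => (Finset.range (t.len + 1)).image (fun k => (q.1, s.len + k))) ∪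
    (s.sh.filter (fun q => q.1 = s.len)).biUnion
      (fun q => (Finset.range (t.len + 1)).image (fun k => (s.len + k, q.2))) ∪
    (t.sh.filter (fun q => q.2 = 0)).biUnion
      (fun q => (Finset.range (s.len + 1)).image (fun k => (q.1 + s.len, k))) ∪
    (t.sh.filter (fun q => q.1 = 0)).biUnion
      (fun q => (Finset.range (s.len + 1)).image (fun k => (k, q.2 + s.len)))

/-- `r = s ⊕ t` is the direct sum of the mesh patterns `s` and `t` (defined when the top
right corner box of `s` and the bottom left corner box of `t` are not shaded). -/
def IsDSum (s t r : MeshPattern) : Prop :=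
  (s.len, s.len) ∉ s.sh ∧ (0, 0) ∉ t.sh ∧
    r.len = s.len + t.len ∧ r.perm = dsumPerm s t ∧ r.sh = dsumSh s t

/-- A mesh pattern is indecomposable if it cannot be written as a direct sum `a ⊕ b`
with neither `a` nor `b` equal to it. -/
def Indecomposable (m : MeshPattern) : Prop :=
  ¬ ∃ s t, s ≠ m ∧ t ≠ m ∧ IsDSum s t m

/-- `SumOfList L m`: `m` is the direct sum of the list `L` of mesh patterns
(the empty list summing to the empty pattern `ε^∅`). -/
def SumOfList : List MeshPattern → MeshPattern → Prop
  | [], m => m.len = 0 ∧ m.sh = ∅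
  | [a], m => a = m
  | a :: b :: rest, m => ∃ r, SumOfList (b :: rest) r ∧ IsDSum a r m

/-- Underlying permutation of the skew sum `s ⊖ t`. -/
def sksumPerm (s t : MeshPattern) : ℕ → ℕ := fun i =>
  if i = 0 then 0
  else if i ≤ s.len then s.perm i + t.len
  else if i ≤ s.len + t.len then t.perm (i - s.len)
  else 0

/-- Shading of the skew sum `s ⊖ t` (s placed to the north west of `t`), with boxes on
the shared boundary extended to the new boundary. -/
def sksumSh (s t : MeshPattern) : Finset (ℕ × ℕ) :=
  s.sh.image (fun q => (q.1, q.2 + t.len)) ∪ t.sh.image (fun q => (q.1 + s.len, q.2)) ∪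
    (s.sh.filter (fun q => q.1 = s.len)).biUnion
      (fun q => (Finset.range (t.len + 1)).image (fun k => (s.len + k, q.2 + t.len))) ∪
    (s.sh.filter (fun q => q.2 = 0)).biUnion
      (fun q => (Finset.range (t.len + 1)).image (fun k => (q.1, k))) ∪
    (t.sh.filter (fun q => q.2 = t.len)).biUnion
      (fun q => (Finset.range (s.len + 1)).image (fun k => (q.1 + s.len, t.len + k))) ∪
    (t.sh.filter (fun q => q.1 = 0)).biUnion
      (fun q => (Finset.range (s.len + 1)).image (fun k => (k, q.2)))

/-- `r = s ⊖ t` is the skew sum of the mesh patterns `s` and `t` (defined when the bottom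
right corner box of `s` and the top left corner box of `t` are not shaded). -/
def IsSkewSum (s t r : MeshPattern) : Prop :=
  (s.len, 0) ∉ s.sh ∧ (0, t.len) ∉ t.sh ∧
    r.len = s.len + t.len ∧ r.perm = sksumPerm s t ∧ r.sh = sksumSh s t

/-- A mesh pattern is skew-indecomposable if it cannot be written as a skew sum `a ⊖ b`
with neither `a` nor `b` equal to it. -/
def SkewIndecomposable (m : MeshPattern) : Prop :=
  ¬ ∃ s t, s ≠ m ∧ t ≠ m ∧ IsSkewSum s t m

/-- Connectivity (zig-zag of comparabilities) inside a subset `I` of the mesh pattern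
poset. -/
def ConnIn (I : Set MeshPattern) (a b : MeshPattern) : Prop :=
  Relation.ReflTransGen (fun u v => u ∈ I ∧ v ∈ I ∧ (u ≤ v ∨ v ≤ u)) a b

/-- The interval `[m, p]` is strongly disconnected: its open interior has at least two
connected components each containing more than one element. -/
def StronglyDisconnectedInterval (m p : MeshPattern) : Prop :=
  ∃ a b, (m < a ∧ a < p) ∧ (m < b ∧ b < p) ∧ ¬ ConnIn {c | m < c ∧ c < p} a b ∧
    (∃ a', (m < a' ∧ a' < p) ∧ a' ≠ a ∧ ConnIn {c | m < c ∧ c < p} a a') ∧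
    (∃ b', (m < b' ∧ b' < p) ∧ b' ≠ b ∧ ConnIn {c | m < c ∧ c < p} b b')

/-- The occurrence of `m` in `m ⊕ m` (or `m ⊖ m`) as the first `|m|` points. -/
def eta1 (m : MeshPattern) : ℕ → ℕ := fun i => if 1 ≤ i ∧ i ≤ m.len then i else 0

/-- The occurrence of `m` in `m ⊕ m` (or `m ⊖ m`) as the last `|m|` points. -/
def eta2 (m : MeshPattern) : ℕ → ℕ := fun i => if 1 ≤ i ∧ i ≤ m.len then i + m.len else 0

/-- `i` (with `2 ≤ i ≤ len`) is the position of an adjacency tail: the letter at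
position `i` differs by one from the letter at position `i - 1`. -/
def IsAdjTail (m : MeshPattern) (i : ℕ) : Prop :=
  2 ≤ i ∧ i ≤ m.len ∧ (m.perm i = m.perm (i - 1) + 1 ∨ m.perm (i - 1) = m.perm i + 1)

open Classical in
/-- `adj(cl m)`: the number of adjacency tails of the underlying permutation of `m`. -/
noncomputable def adjCount (m : MeshPattern) : ℕ :=
  ((Finset.range (m.len + 1)).filter (fun i => IsAdjTail m i)).card

/-- The total number of mesh patterns of length `n`. -/
def Tcount (n : ℕ) : ℕ := n.factorial * 2 ^ ((n + 1) ^ 2)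

end MeshPattern

/-- Binary words, partially ordered by (not necessarily contiguous) subword containment:
the poset `𝓦`. -/
structure Word where
  toList : List Bool

instance : LE Word := ⟨fun u w => u.toList.Sublist w.toList⟩

/-- The binary word associated to a mesh pattern `m` in the class `Γ`: it has length
`|m| - 1`, and for each letter `i` with `2 ≤ i ≤ |m|` the corresponding entry is
`false` (i.e. `0`) if the letter `i` appears before the letter `1` in `cl m`,
and `true` (i.e. `1`) otherwise. -/
noncomputable def MeshPattern.wordOf (m : MeshPattern) : List Bool :=
  (List.range (m.len - 1)).map (fun k => if m.pos (k + 2) < m.pos 1 then false else true)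

namespace MeshPattern

/-!
A decomposition `m = s ⊕ t` is determined by `m` and the length `j = |s|`, and the lengths
at which `m` splits can be read off `m` itself (`SplitAt`). Since the splitting points of
the left part are exactly the splitting points of `m` below `j`, the first summand of a
decomposition into nonempty indecomposables must end at the least positive splitting
point of `m`. Existence and uniqueness then follow by induction on the length.
-/

protected theorem ext {m p : MeshPattern} (hlen : m.len = p.len) (hperm : m.perm = p.perm)
    (hsh : m.sh = p.sh) : m = p := by
  cases m; cases p; simp_all

section DSumShading

variable {s t : MeshPattern} {a b : ℕ}

theorem mem_dsumSh :
    (a, b) ∈ dsumSh s t ↔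
      (a, b) ∈ s.sh ∨
      (∃ x y, (x, y) ∈ t.sh ∧ a = x + s.len ∧ b = y + s.len) ∨
      ((a, s.len) ∈ s.sh ∧ s.len ≤ b ∧ b ≤ s.len + t.len) ∨
      ((s.len, b) ∈ s.sh ∧ s.len ≤ a ∧ a ≤ s.len + t.len) ∨
      (∃ x, (x, 0) ∈ t.sh ∧ a = x + s.len ∧ b ≤ s.len) ∨
      (∃ y, (0, y) ∈ t.sh ∧ b = y + s.len ∧ a ≤ s.len) := by
  simp only [dsumSh, Finset.mem_union, Finset.mem_image, Finset.mem_biUnion,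
    Finset.mem_filter, Finset.mem_range, Prod.mk.injEq, Prod.exists]
  constructor
  · rintro (((((h | ⟨x, y, h, rfl, rfl⟩) | ⟨x, y, ⟨h, rfl⟩, k, hk, rfl, rfl⟩) |
      ⟨x, y, ⟨h, rfl⟩, k, hk, rfl, rfl⟩) | ⟨x, y, ⟨h, rfl⟩, k, hk, rfl, rfl⟩) |
      ⟨x, y, ⟨h, rfl⟩, k, hk, rfl, rfl⟩)
    · exact Or.inl h
    · exact Or.inr (Or.inl ⟨x, y, h, rfl, rfl⟩)
    · exact Or.inr (Or.inr (Or.inl ⟨h, by omega, by omega⟩))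
    · exact Or.inr (Or.inr (Or.inr (Or.inl ⟨h, by omega, by omega⟩)))
    · exact Or.inr (Or.inr (Or.inr (Or.inr (Or.inl ⟨x, h, rfl, by omega⟩))))
    · exact Or.inr (Or.inr (Or.inr (Or.inr (Or.inr ⟨y, h, rfl, by omega⟩))))
  · rintro (h | ⟨x, y, h, rfl, rfl⟩ | ⟨h, hb1, hb2⟩ | ⟨h, ha1, ha2⟩ |
      ⟨x, h, rfl, hb⟩ | ⟨y, h, rfl, ha⟩)
    · exact Or.inl (Or.inl (Or.inl (Or.inl (Or.inl h))))
    · exact Or.inl (Or.inl (Or.inl (Or.inl (Or.inr ⟨x, y, h, rfl, rfl⟩))))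
    · exact Or.inl (Or.inl (Or.inl (Or.inr ⟨a, s.len, ⟨h, rfl⟩, b - s.len, by omega, rfl,
        by omega⟩)))
    · exact Or.inl (Or.inl (Or.inr ⟨s.len, b, ⟨h, rfl⟩, a - s.len, by omega, by omega, rfl⟩))
    · exact Or.inl (Or.inr ⟨x, 0, ⟨h, rfl⟩, b, by omega, rfl, rfl⟩)
    · exact Or.inr ⟨0, y, ⟨h, rfl⟩, a, by omega, rfl, rfl⟩

theorem le_of_mem_dsumSh (h : (a, b) ∈ dsumSh s t) :
    a ≤ s.len + t.len ∧ b ≤ s.len + t.len := by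
  have := s.sh_mem
  have := t.sh_mem
  grind [mem_dsumSh]

theorem mem_dsumSh_of_le (ht : (0, 0) ∉ t.sh) (ha : a ≤ s.len) (hb : b ≤ s.len) :
    (a, b) ∈ dsumSh s t ↔ (a, b) ∈ s.sh := by
  grind [mem_dsumSh]

theorem add_mem_dsumSh (hs : (s.len, s.len) ∉ s.sh) :
    (a + s.len, b + s.len) ∈ dsumSh s t ↔ (a, b) ∈ t.sh := by
  have := s.sh_mem
  grind [mem_dsumSh]

theorem mem_dsumSh_of_lt_of_lt (ha : a < s.len) (hb : s.len < b) (hb' : b ≤ s.len + t.len) :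
    (a, b) ∈ dsumSh s t ↔ (a, s.len) ∈ s.sh ∨ (0, b - s.len) ∈ t.sh := by
  have := s.sh_mem
  grind [mem_dsumSh]

theorem mem_dsumSh_of_lt_of_lt' (ha : s.len < a) (ha' : a ≤ s.len + t.len) (hb : b < s.len) :
    (a, b) ∈ dsumSh s t ↔ (s.len, b) ∈ s.sh ∨ (a - s.len, 0) ∈ t.sh := by
  have := s.sh_mem
  grind [mem_dsumSh]

end DSumShading

/-- `m` is the direct sum of a pattern of length `j` and a pattern of length `m.len - j`,
read off `m` itself: off-diagonal boxes are shaded exactly when they are extensions of a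
shaded box on the line `x = j` or `y = j`. -/
structure SplitAt (m : MeshPattern) (j : ℕ) : Prop where
  le_len : j ≤ m.len
  perm_le : ∀ i, 1 ≤ i → i ≤ j → m.perm i ≤ j
  corner_not_mem : (j, j) ∉ m.sh
  mem_sh_of_lt_of_lt : ∀ a b, a < j → j < b → b ≤ m.len →
    ((a, b) ∈ m.sh ↔ (a, j) ∈ m.sh ∨ (j, b) ∈ m.sh)
  mem_sh_of_lt_of_lt' : ∀ a b, j < a → a ≤ m.len → b < j →
    ((a, b) ∈ m.sh ↔ (j, b) ∈ m.sh ∨ (a, j) ∈ m.sh)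

namespace SplitAt

variable {m : MeshPattern} {j : ℕ}

theorem exists_perm_eq (h : SplitAt m j) {v : ℕ} (h1 : 1 ≤ v) (h2 : v ≤ j) :
    ∃ i, 1 ≤ i ∧ i ≤ j ∧ m.perm i = v := by
  obtain ⟨i, hi, hiv⟩ := Finset.surj_on_of_inj_on_of_card_le
    (s := Finset.Icc 1 j) (t := Finset.Icc 1 j) (fun i _ => m.perm i)
    (fun i hi => by
      rw [Finset.mem_Icc] at hi ⊢
      exact ⟨(m.perm_mem i hi.1 (hi.2.trans h.le_len)).1, h.perm_le i hi.1 hi.2⟩)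
    (fun i₁ i₂ hi₁ hi₂ => by
      rw [Finset.mem_Icc] at hi₁ hi₂
      exact m.perm_inj i₁ i₂ hi₁.1 (hi₁.2.trans h.le_len) hi₂.1 (hi₂.2.trans h.le_len))
    le_rfl v (Finset.mem_Icc.mpr ⟨h1, h2⟩)
  rw [Finset.mem_Icc] at hi
  exact ⟨i, hi.1, hi.2, hiv.symm⟩

theorem lt_perm (h : SplitAt m j) {i : ℕ} (h1 : j < i) (h2 : i ≤ m.len) : j < m.perm i := by
  by_contra! hle
  have hmem := m.perm_mem i (by omega) h2
  obtain ⟨i', hi1, hi2, hi⟩ := h.exists_perm_eq hmem.1 hle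
  have := m.perm_inj i' i hi1 (hi2.trans h.le_len) (by omega) h2 hi
  omega

end SplitAt

def leftPat (m : MeshPattern) (j : ℕ) (h : SplitAt m j) : MeshPattern where
  len := j
  perm := fun i => if 1 ≤ i ∧ i ≤ j then m.perm i else 0
  sh := m.sh.filter (fun q => q.1 ≤ j ∧ q.2 ≤ j)
  perm_mem i h1 h2 := by
    rw [if_pos ⟨h1, h2⟩]
    exact ⟨(m.perm_mem i h1 (h2.trans h.le_len)).1, h.perm_le i h1 h2⟩
  perm_zero i hi := by rw [if_neg]; omega
  perm_inj i i' h1 h2 h3 h4 hi := by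
    rw [if_pos ⟨h1, h2⟩, if_pos ⟨h3, h4⟩] at hi
    exact m.perm_inj i i' h1 (h2.trans h.le_len) h3 (h4.trans h.le_len) hi
  perm_surj v h1 h2 := by
    obtain ⟨i, hi1, hi2, hi⟩ := h.exists_perm_eq h1 h2
    exact ⟨i, hi1, hi2, by rw [if_pos ⟨hi1, hi2⟩, hi]⟩
  sh_mem q hq := (Finset.mem_filter.mp hq).2

def rightPat (m : MeshPattern) (j : ℕ) (h : SplitAt m j) : MeshPattern where
  len := m.len - j
  perm := fun i => if 1 ≤ i ∧ i ≤ m.len - j then m.perm (i + j) - j else 0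
  sh := (m.sh.filter (fun q => j ≤ q.1 ∧ j ≤ q.2)).image (fun q => (q.1 - j, q.2 - j))
  perm_mem i h1 h2 := by
    rw [if_pos ⟨h1, h2⟩]
    have := h.lt_perm (i := i + j) (by omega) (by omega)
    have := (m.perm_mem (i + j) (by omega) (by omega)).2
    omega
  perm_zero i hi := by rw [if_neg]; omega
  perm_inj i i' h1 h2 h3 h4 hi := by
    rw [if_pos ⟨h1, h2⟩, if_pos ⟨h3, h4⟩] at hi
    have := h.lt_perm (i := i + j) (by omega) (by omega)
    have := h.lt_perm (i := i' + j) (by omega) (by omega)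
    have := m.perm_inj (i + j) (i' + j) (by omega) (by omega) (by omega) (by omega) (by omega)
    omega
  perm_surj v h1 h2 := by
    obtain ⟨i, hi1, hi2, hi⟩ := m.perm_surj (v + j) (by omega) (by omega)
    have hji : j < i := by
      by_contra! hij
      have := h.perm_le i hi1 hij
      omega
    refine ⟨i - j, by omega, by omega, ?_⟩
    rw [if_pos ⟨by omega, by omega⟩, Nat.sub_add_cancel hji.le, hi, Nat.add_sub_cancel]
  sh_mem q hq := by
    obtain ⟨c, hc, rfl⟩ := Finset.mem_image.mp hq
    have := m.sh_mem c (Finset.mem_filter.mp hc).1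
    exact ⟨by omega, by omega⟩

section SplitParts

variable {m : MeshPattern} {j : ℕ} (h : SplitAt m j)

@[simp]
theorem leftPat_len : (leftPat m j h).len = j := rfl

@[simp]
theorem rightPat_len : (rightPat m j h).len = m.len - j := rfl

theorem mem_leftPat_sh {a b : ℕ} (ha : a ≤ j) (hb : b ≤ j) :
    (a, b) ∈ (leftPat m j h).sh ↔ (a, b) ∈ m.sh := by
  simp [leftPat, ha, hb]

theorem mem_rightPat_sh {a b : ℕ} : (a, b) ∈ (rightPat m j h).sh ↔ (a + j, b + j) ∈ m.sh := by
  simp only [rightPat, Finset.mem_image, Finset.mem_filter, Prod.mk.injEq, Prod.exists]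
  constructor
  · rintro ⟨x, y, ⟨hm, hx, hy⟩, rfl, rfl⟩
    rwa [Nat.sub_add_cancel hx, Nat.sub_add_cancel hy]
  · intro hm
    exact ⟨a + j, b + j, ⟨hm, by omega, by omega⟩, by omega, by omega⟩

end SplitParts

theorem isDSum_leftPat_rightPat {m : MeshPattern} {j : ℕ} (h : SplitAt m j) :
    IsDSum (leftPat m j h) (rightPat m j h) m := by
  have hj := h.le_len
  have hL : (j, j) ∉ (leftPat m j h).sh := by
    rw [mem_leftPat_sh h le_rfl le_rfl]
    exact h.corner_not_mem
  have hR : (0, 0) ∉ (rightPat m j h).sh := by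
    simpa [mem_rightPat_sh] using h.corner_not_mem
  refine ⟨hL, hR, by simp only [leftPat_len, rightPat_len]; omega, ?_, ?_⟩
  · funext i
    dsimp only [dsumPerm, leftPat, rightPat]
    split_ifs <;> first
      | rfl
      | (rw [show i - j + j = i by omega]; have := h.lt_perm (i := i) (by omega) (by omega); omega)
      | exact m.perm_zero i (by omega)
      | omega
  · ext ⟨a, b⟩
    rcases le_or_gt (max a b) m.len with hab | hab
    · rw [max_le_iff] at hab
      by_cases hNW : a < j ∧ j < b
      · rw [mem_dsumSh_of_lt_of_lt (by simpa using hNW.1) (by simpa using hNW.2) (by simp; omega),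
          h.mem_sh_of_lt_of_lt a b hNW.1 hNW.2 hab.2, leftPat_len,
          mem_leftPat_sh h hNW.1.le le_rfl, mem_rightPat_sh, Nat.sub_add_cancel hNW.2.le,
          Nat.zero_add]
      by_cases hSE : j < a ∧ b < j
      · rw [mem_dsumSh_of_lt_of_lt' (by simpa using hSE.1) (by simp; omega) (by simpa using hSE.2),
          h.mem_sh_of_lt_of_lt' a b hSE.1 hab.1 hSE.2, leftPat_len,
          mem_leftPat_sh h le_rfl hSE.2.le, mem_rightPat_sh, Nat.sub_add_cancel hSE.1.le,
          Nat.zero_add]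
      rcases (by omega : (a ≤ j ∧ b ≤ j) ∨ (j ≤ a ∧ j ≤ b)) with ⟨ha, hb⟩ | ⟨ha, hb⟩
      · rw [mem_dsumSh_of_le hR ha hb, mem_leftPat_sh h ha hb]
      · obtain ⟨a', rfl⟩ := Nat.exists_eq_add_of_le' ha
        obtain ⟨b', rfl⟩ := Nat.exists_eq_add_of_le' hb
        rw [← mem_rightPat_sh h]
        exact (add_mem_dsumSh hL).symm
    · constructor
      · intro hm
        have := m.sh_mem _ hm
        simp only at this
        omega
      · intro hm
        have := le_of_mem_dsumSh hm
        simp only [leftPat_len, rightPat_len] at this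
        omega

namespace IsDSum

variable {s t m : MeshPattern} (hd : IsDSum s t m)
include hd

theorem len_eq : m.len = s.len + t.len := hd.2.2.1

theorem perm_eq : m.perm = dsumPerm s t := hd.2.2.2.1

theorem sh_eq : m.sh = dsumSh s t := hd.2.2.2.2

theorem mem_sh_of_le {a b : ℕ} (ha : a ≤ s.len) (hb : b ≤ s.len) :
    (a, b) ∈ m.sh ↔ (a, b) ∈ s.sh := by
  rw [hd.sh_eq, mem_dsumSh_of_le hd.2.1 ha hb]

theorem add_mem_sh {a b : ℕ} : (a + s.len, b + s.len) ∈ m.sh ↔ (a, b) ∈ t.sh := by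
  rw [hd.sh_eq, add_mem_dsumSh hd.1]

theorem perm_of_le {i : ℕ} (hi : i ≤ s.len) : m.perm i = s.perm i := by
  rw [hd.perm_eq, dsumPerm, if_pos hi]

theorem perm_add {i : ℕ} (hi : 1 ≤ i) (hi' : i ≤ t.len) :
    m.perm (i + s.len) = t.perm i + s.len := by
  rw [hd.perm_eq, dsumPerm, if_neg (by omega), if_pos (by omega), Nat.add_sub_cancel]

theorem splitAt : SplitAt m s.len where
  le_len := by rw [hd.len_eq]; omega
  perm_le i h1 h2 := by rw [hd.perm_of_le h2]; exact (s.perm_mem i h1 h2).2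
  corner_not_mem := by rw [hd.mem_sh_of_le le_rfl le_rfl]; exact hd.1
  mem_sh_of_lt_of_lt a b ha hb hb' := by
    have := hd.add_mem_sh (a := 0) (b := b - s.len)
    rw [Nat.zero_add, Nat.sub_add_cancel hb.le] at this
    rw [this, hd.mem_sh_of_le ha.le le_rfl, hd.sh_eq,
      mem_dsumSh_of_lt_of_lt ha hb (by rw [← hd.len_eq]; exact hb')]
  mem_sh_of_lt_of_lt' a b ha ha' hb := by
    have := hd.add_mem_sh (a := a - s.len) (b := 0)
    rw [Nat.zero_add, Nat.sub_add_cancel ha.le] at this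
    rw [this, hd.mem_sh_of_le le_rfl hb.le, hd.sh_eq,
      mem_dsumSh_of_lt_of_lt' ha (by rw [← hd.len_eq]; exact ha') hb]

theorem eq_leftPat : s = leftPat m s.len hd.splitAt := by
  refine MeshPattern.ext rfl ?_ ?_
  · funext i
    dsimp only [leftPat]
    split_ifs with hi
    · exact (hd.perm_of_le hi.2).symm
    · exact s.perm_zero i (by omega)
  · ext ⟨a, b⟩
    by_cases hab : a ≤ s.len ∧ b ≤ s.len
    · rw [mem_leftPat_sh _ hab.1 hab.2, hd.mem_sh_of_le hab.1 hab.2]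
    · have := s.sh_mem (a, b)
      simp only [leftPat, Finset.mem_filter]
      tauto

theorem eq_rightPat : t = rightPat m s.len hd.splitAt := by
  have hlen : t.len = m.len - s.len := by rw [hd.len_eq]; omega
  refine MeshPattern.ext hlen ?_ ?_
  · funext i
    dsimp only [rightPat]
    split_ifs with hi
    · rw [hd.perm_add hi.1 (by omega), Nat.add_sub_cancel]
    · exact t.perm_zero i (by omega)
  · ext ⟨a, b⟩
    rw [mem_rightPat_sh, hd.add_mem_sh]

end IsDSum

theorem leftPat_eq_self {m : MeshPattern} {j : ℕ} (h : SplitAt m j) (hj : j = m.len) :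
    leftPat m j h = m := by
  subst hj
  refine MeshPattern.ext rfl ?_ ?_
  · funext i
    dsimp only [leftPat]
    split_ifs with hi
    · rfl
    · exact (m.perm_zero i (by omega)).symm
  · exact Finset.filter_true_of_mem m.sh_mem

theorem rightPat_eq_self {m : MeshPattern} {j : ℕ} (h : SplitAt m j) (hj : j = 0) :
    rightPat m j h = m := by
  subst hj
  refine MeshPattern.ext (Nat.sub_zero _) ?_ ?_
  · funext i
    dsimp only [rightPat]
    split_ifs with hi
    · rfl
    · exact (m.perm_zero i (by omega)).symm
  · ext ⟨a, b⟩
    exact mem_rightPat_sh h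

theorem splitAt_leftPat_iff {m : MeshPattern} {k j : ℕ} (hk : SplitAt m k) (hjk : j ≤ k) :
    SplitAt (leftPat m k hk) j ↔ SplitAt m j := by
  have hkm := hk.le_len
  have hperm : ∀ i, 1 ≤ i → i ≤ j → (leftPat m k hk).perm i = m.perm i := fun i h1 h2 =>
    if_pos ⟨h1, h2.trans hjk⟩
  constructor
  · intro hj
    rcases hjk.eq_or_lt with rfl | hjk
    · exact hk
    refine ⟨hjk.le.trans hkm, fun i h1 h2 => hperm i h1 h2 ▸ hj.perm_le i h1 h2, ?_, ?_, ?_⟩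
    · simpa (disch := omega) only [mem_leftPat_sh] using hj.corner_not_mem
    · intro a b ha hb hbm
      by_cases hbk : b ≤ k
      · simpa (disch := omega) only [mem_leftPat_sh] using hj.mem_sh_of_lt_of_lt a b ha hb hbk
      · have hakj := hj.mem_sh_of_lt_of_lt a k ha hjk le_rfl
        simp (disch := omega) only [mem_leftPat_sh] at hakj
        rw [hk.mem_sh_of_lt_of_lt a b (by omega) (by omega) hbm,
          hk.mem_sh_of_lt_of_lt j b hjk (by omega) hbm, hakj]
        tauto
    · intro a b ha ham hb
      by_cases hak : a ≤ k
      · simpa (disch := omega) only [mem_leftPat_sh] using hj.mem_sh_of_lt_of_lt' a b ha hak hb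
      · have hkbj := hj.mem_sh_of_lt_of_lt' k b hjk le_rfl hb
        simp (disch := omega) only [mem_leftPat_sh] at hkbj
        rw [hk.mem_sh_of_lt_of_lt' a b (by omega) ham (by omega),
          hk.mem_sh_of_lt_of_lt' a j (by omega) ham hjk, hkbj]
        tauto
  · intro hj
    refine ⟨hjk, fun i h1 h2 => (hperm i h1 h2).symm ▸ hj.perm_le i h1 h2, ?_, ?_, ?_⟩
    · simpa (disch := omega) only [mem_leftPat_sh] using hj.corner_not_mem
    · intro a b ha hb (hbk : b ≤ k)
      simpa (disch := omega) only [mem_leftPat_sh] using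
        hj.mem_sh_of_lt_of_lt a b ha hb (hbk.trans hkm)
    · intro a b ha (hak : a ≤ k) hb
      simpa (disch := omega) only [mem_leftPat_sh] using
        hj.mem_sh_of_lt_of_lt' a b ha (hak.trans hkm) hb

theorem indecomposable_iff {m : MeshPattern} :
    Indecomposable m ↔ ∀ j, 0 < j → j < m.len → ¬ SplitAt m j := by
  constructor
  · intro hm j hj hjm h
    refine hm ⟨leftPat m j h, rightPat m j h, ?_, ?_, isDSum_leftPat_rightPat h⟩ <;>
      intro heq <;> have := congrArg len heq <;> simp only [leftPat_len, rightPat_len] at this <;>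
      omega
  · rintro hm ⟨s, t, hs, ht, hd⟩
    have hle := hd.splitAt.le_len
    rcases Nat.eq_zero_or_pos s.len with h0 | hpos
    · exact ht (hd.eq_rightPat.trans (rightPat_eq_self _ h0))
    rcases hle.eq_or_lt with hlen | hlt
    · exact hs (hd.eq_leftPat.trans (leftPat_eq_self _ hlen))
    · exact hm s.len hpos hlt hd.splitAt

theorem IsDSum.eq_of_len_eq {s t s' t' m : MeshPattern} (hd : IsDSum s t m) (hd' : IsDSum s' t' m)
    (hlen : s.len = s'.len) : s = s' ∧ t = t' := by
  constructor
  · rw [hd.eq_leftPat, hd'.eq_leftPat]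
    congr 1
  · rw [hd.eq_rightPat, hd'.eq_rightPat]
    congr 1

theorem indecomposable_leftPat {m : MeshPattern} {j : ℕ} (h : SplitAt m j)
    (hmin : ∀ i, 0 < i → i < j → ¬ SplitAt m i) : Indecomposable (leftPat m j h) :=
  indecomposable_iff.2 fun i hi hij hsplit =>
    hmin i hi hij ((splitAt_leftPat_iff h hij.le).1 hsplit)

theorem SumOfList.len_eq : ∀ {L : List MeshPattern} {m : MeshPattern},
    SumOfList L m → m.len = (L.map len).sum
  | [], _, h => h.1
  | [_], _, h => by rw [← h]; simp
  | _ :: _ :: _, _, ⟨_, hr, hd⟩ => by rw [hd.len_eq, hr.len_eq]; simp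

def IsDecomposition (L : List MeshPattern) (m : MeshPattern) : Prop :=
  (∀ a ∈ L, Indecomposable a ∧ 1 ≤ a.len) ∧ SumOfList L m

namespace IsDecomposition

variable {a b m : MeshPattern} {T : List MeshPattern}

theorem eq_nil_iff {L : List MeshPattern} (h : IsDecomposition L m) : L = [] ↔ m.len = 0 := by
  rw [h.2.len_eq]
  cases L with
  | nil => simp
  | cons a T =>
    have := (h.1 a List.mem_cons_self).2
    simp only [List.map_cons, List.sum_cons, reduceCtorEq, false_iff]
    omega

theorem tail (h : IsDecomposition (a :: b :: T) m) :
    ∃ r, IsDSum a r m ∧ IsDecomposition (b :: T) r := by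
  obtain ⟨r, hr, hd⟩ := h.2
  exact ⟨r, hd, fun x hx => h.1 x (List.mem_cons_of_mem a hx), hr⟩

theorem eq_nil_iff_head_len (h : IsDecomposition (a :: T) m) : T = [] ↔ a.len = m.len := by
  cases T with
  | nil => simpa using congrArg len h.2
  | cons b T =>
    obtain ⟨r, hd, hr⟩ := h.tail
    have := hr.eq_nil_iff
    simp only [reduceCtorEq, false_iff] at this ⊢
    rw [hd.len_eq]
    omega

theorem head_len_le_of_splitAt (h : IsDecomposition (a :: T) m) {j : ℕ} (hj : SplitAt m j)
    (hj0 : 0 < j) : a.len ≤ j := by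
  have ha := (h.1 a List.mem_cons_self).1
  cases T with
  | nil =>
    have ham : a = m := h.2
    subst ham
    by_contra! hlt
    exact indecomposable_iff.1 ha j hj0 hlt hj
  | cons b T =>
    obtain ⟨r, hd, -⟩ := h.tail
    by_contra! hlt
    have hsplit := (splitAt_leftPat_iff hd.splitAt hlt.le).2 hj
    rw [← hd.eq_leftPat] at hsplit
    exact indecomposable_iff.1 ha j hj0 hlt hsplit

theorem head_len_le {a' : MeshPattern} {T' : List MeshPattern} (h : IsDecomposition (a :: T) m)
    (h' : IsDecomposition (a' :: T') m) : a.len ≤ a'.len := by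
  cases T' with
  | nil => rw [(h'.eq_nil_iff_head_len).1 rfl, h.2.len_eq]; simp
  | cons b' T' =>
    obtain ⟨r, hd, -⟩ := h'.tail
    exact h.head_len_le_of_splitAt hd.splitAt (h'.1 a' List.mem_cons_self).2

theorem unique : ∀ {L₁ L₂ : List MeshPattern} {m : MeshPattern},
    IsDecomposition L₁ m → IsDecomposition L₂ m → L₁ = L₂
  | [], L₂, _, h₁, h₂ => (h₂.eq_nil_iff.2 (h₁.eq_nil_iff.1 rfl)).symm
  | _ :: _, [], _, h₁, h₂ => h₁.eq_nil_iff.2 (h₂.eq_nil_iff.1 rfl)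
  | a₁ :: T₁, a₂ :: T₂, m, h₁, h₂ => by
    have hlen := le_antisymm (h₁.head_len_le h₂) (h₂.head_len_le h₁)
    have hnil : T₁ = [] ↔ T₂ = [] := by
      rw [h₁.eq_nil_iff_head_len, h₂.eq_nil_iff_head_len, hlen]
    match T₁, T₂, hnil, h₁, h₂ with
    | [], [], _, h₁, h₂ => rw [show a₁ = m from h₁.2, show a₂ = m from h₂.2]
    | [], _ :: _, hnil, _, _ => simp at hnil
    | _ :: _, [], hnil, _, _ => simp at hnil
    | b₁ :: T₁, b₂ :: T₂, _, h₁, h₂ =>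
      obtain ⟨r₁, hd₁, hr₁⟩ := h₁.tail
      obtain ⟨r₂, hd₂, hr₂⟩ := h₂.tail
      obtain ⟨rfl, rfl⟩ := hd₁.eq_of_len_eq hd₂ hlen
      rw [hr₁.unique hr₂]

theorem cons (ha : Indecomposable a) (ha0 : 0 < a.len) {r : MeshPattern} (hd : IsDSum a r m)
    (hr : IsDecomposition (b :: T) r) : IsDecomposition (a :: b :: T) m := by
  refine ⟨fun x hx => ?_, r, hr.2, hd⟩
  rcases List.mem_cons.1 hx with rfl | hx
  exacts [⟨ha, ha0⟩, hr.1 x hx]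

end IsDecomposition

theorem exists_isDecomposition {m : MeshPattern} (hm : 0 < m.len) :
    ∃ L, IsDecomposition L m := by
  classical
  by_cases hsplit : ∃ j, 0 < j ∧ j < m.len ∧ SplitAt m j
  · obtain ⟨hj0, hjm, hj⟩ := Nat.find_spec hsplit
    set j := Nat.find hsplit
    have hind := indecomposable_leftPat hj fun i hi hij hi' => Nat.find_min hsplit hij ⟨hi, by omega, hi'⟩
    obtain ⟨L, hL⟩ := exists_isDecomposition (m := rightPat m j hj) (by simp; omega)
    cases L with
    | nil => exact absurd (hL.eq_nil_iff.1 rfl) (by simp; omega)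
    | cons b T => exact ⟨_, hL.cons hind hj0 (isDSum_leftPat_rightPat hj)⟩
  · push Not at hsplit
    refine ⟨[m], ?_, rfl⟩
    simp only [List.mem_singleton, forall_eq]
    exact ⟨indecomposable_iff.2 fun j hj0 hjm => hsplit j hj0 hjm, hm⟩
termination_by m.len
decreasing_by simp only [rightPat_len]; omega

/-- Every (nonempty) mesh pattern has a unique decomposition as a direct sum of
(nonempty) indecomposable mesh patterns. -/
theorem unique_decomposition (m : MeshPattern) (hm : 1 ≤ m.len) :
    ∃! L : List MeshPattern,
      (∀ a ∈ L, Indecomposable a ∧ 1 ≤ a.len) ∧ SumOfList L m := by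
  obtain ⟨L, hL⟩ := exists_isDecomposition hm
  exact ⟨L, hL, fun L' hL' => IsDecomposition.unique hL' hL⟩

end MeshPattern
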